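/- Let n = (2,1,1), let △ be the triangle of G with vertices (0,0), (0,1), (1,1) and △' the triangle with vertices (0,0), (1,0), (1,1), sharing the type-3 edge from (0,0) to (1,1), and let M = △̂ ∪ △̂'. The polynomial f = 4(x−y)y + 4(1−x)(x−y) + (x−y)² belongs to V_{(2,1,1)}, and the piecewise function g defined by g|_△ = 0 and g|_{△'} = f is continuous on M* (so g ∈ S^{(0,0,0)}(M, V_n)); however, g is not a linear combination of the active box spline translates B_n(M), and g is not of class C¹ across the shared edge, so g ∉ S^{(0,1,1)}(M, V_n). -/

import Mathlib

/- ## The three-directional (type-I) grid -/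

noncomputable section

open MvPolynomial Set Function

/-- Points of the plane. -/
abbrev Pt := ℝ × ℝ

/-- Bivariate real polynomials `ℝ[x,y]`. -/
abbrev BPoly := MvPolynomial (Fin 2) ℝ

/-- Evaluation of a bivariate polynomial at a point of the plane. -/
def evalP (q : BPoly) (p : Pt) : ℝ := MvPolynomial.eval ![p.1, p.2] q

/-- Triangles of the three-directional grid `G`:  `⟨v, false⟩` is the "lower"
triangle with vertices `v, v+(1,0), v+(1,1)`, and `⟨v, true⟩` is the "upper"
triangle with vertices `v, v+(0,1), v+(1,1)`. -/
structure Tri where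
  v : ℤ × ℤ
  up : Bool
deriving DecidableEq

namespace Tri

/-- The open triangle in the plane realizing a combinatorial triangle. -/
def toSet (T : Tri) : Set Pt :=
  if T.up then
    {p | (T.v.1 : ℝ) < p.1 ∧ p.1 - (T.v.1 : ℝ) < p.2 - (T.v.2 : ℝ) ∧ p.2 < (T.v.2 : ℝ) + 1}
  else
    {p | (T.v.2 : ℝ) < p.2 ∧ p.2 - (T.v.2 : ℝ) < p.1 - (T.v.1 : ℝ) ∧ p.1 < (T.v.1 : ℝ) + 1}

/-- The closed triangle. -/
def cl (T : Tri) : Set Pt := closure T.toSet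

/-- The three lattice vertices of a triangle. -/
def vertices (T : Tri) : Finset (ℤ × ℤ) :=
  if T.up then {T.v, (T.v.1, T.v.2 + 1), (T.v.1 + 1, T.v.2 + 1)}
  else {T.v, (T.v.1 + 1, T.v.2), (T.v.1 + 1, T.v.2 + 1)}

end Tri

/-- Edges of the grid: a lattice point together with a direction type
(`0 ↦ e₁ = (1,0)`, `1 ↦ e₂ = (0,1)`, `2 ↦ e₃ = (1,1)`); the edge of type `i`
at `v` joins `v` to `v + eᵢ`. -/
abbrev Edge := (ℤ × ℤ) × Fin 3

/-- The three direction vectors `e₁, e₂, e₃`. -/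
def dirZ : Fin 3 → ℤ × ℤ := ![(1, 0), (0, 1), (1, 1)]

/-- The three edges of a triangle. -/
def Tri.edges (T : Tri) : Finset Edge :=
  if T.up then {((T.v.1, T.v.2 + 1), 0), (T.v, 1), (T.v, 2)}
  else {(T.v, 0), ((T.v.1 + 1, T.v.2), 1), (T.v, 2)}

/-- The open segment realizing an edge. -/
def Edge.seg (ε : Edge) : Set Pt :=
  {p | ∃ t : ℝ, 0 < t ∧ t < 1 ∧
    p = ((ε.1.1 : ℝ) + t * ((dirZ ε.2).1 : ℝ), (ε.1.2 : ℝ) + t * ((dirZ ε.2).2 : ℝ))}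

/-- `M*`: the union of the closed triangles of a multicell domain. -/
def Mstar (M : Finset Tri) : Set Pt := ⋃ T ∈ M, T.cl

/-- `ℙ(M,V)`: continuous functions on `M*` whose restriction to each triangle
of `M` is the restriction of a polynomial in `V`. -/
def PP (M : Finset Tri) (V : Set BPoly) : Set (Pt → ℝ) :=
  {f | ContinuousOn f (Mstar M) ∧ ∀ T ∈ M, ∃ q ∈ V, EqOn f (evalP q) T.toSet}

/-- The diamond of an edge: union of the closed triangles of `M` having `ε`
as an edge. -/
def diamond (M : Finset Tri) (ε : Edge) : Set Pt :=
  ⋃ T ∈ M.filter (fun T => ε ∈ T.edges), T.cl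

/-- The spline space with edge smoothness `d` on the multicell domain `M`:
piecewise polynomials (pieces from `V`) which are `C^{dᵢ}` on the diamond of
every edge of type `i` of `M`. -/
def SplineSpace (M : Finset Tri) (V : Set BPoly) (d : Fin 3 → ℕ) : Set (Pt → ℝ) :=
  {f | f ∈ PP M V ∧
    ∀ ε : Edge, (∃ T ∈ M, ε ∈ T.edges) → ContDiffOn ℝ (d ε.2) f (diamond M ε)}

/-- Directional derivative of a polynomial along an integer vector. -/
def dirD (e : ℤ × ℤ) (q : BPoly) : BPoly :=
  (e.1 : ℝ) • MvPolynomial.pderiv (0 : Fin 2) q + (e.2 : ℝ) • MvPolynomial.pderiv (1 : Fin 2) q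

/-- The mixed directional derivative operator
`D_s = (∂_{e₁})^{s₁} (∂_{e₂})^{s₂} (∂_{e₃})^{s₃}`. -/
def Dmix (s : Fin 3 → ℕ) (q : BPoly) : BPoly :=
  (dirD (dirZ 0))^[s 0] ((dirD (dirZ 1))^[s 1] ((dirD (dirZ 2))^[s 2] q))

/-- The index sets `Iᵢ^d`; `I₁^d = {s | s₂+s₃ ≤ d₁}` and cyclically. -/
def Iset (d : Fin 3 → ℕ) (i : Fin 3) : Set (Fin 3 → ℕ) :=
  {s | s (i + 1) + s (i + 2) ≤ d i}

/-- Two triangles of the grid are adjacent if they are distinct and share an edge. -/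
def Adj (T T' : Tri) : Prop := T ≠ T' ∧ ∃ ε : Edge, ε ∈ T.edges ∧ ε ∈ T'.edges

/-- `c` is an edge-connected chain of length `m` from `T` to `T'`. -/
def TriIsChain (T T' : Tri) (m : ℕ) (c : ℕ → Tri) : Prop :=
  c 0 = T ∧ c m = T' ∧ ∀ k < m, Adj (c k) (c (k + 1))

/-- The set of types of the edges crossed by a chain. -/
def chainTypes (m : ℕ) (c : ℕ → Tri) : Set (Fin 3) :=
  {i | ∃ k < m, ∃ ε : Edge, ε.2 = i ∧ ε ∈ (c k).edges ∧ ε ∈ (c (k + 1)).edges}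

/-- Minimal length of an edge-connected chain between two triangles. -/
def minLen (T T' : Tri) : ℕ := sInf {m | ∃ c, TriIsChain T T' m c}

/-- The smoothness type `SmType(△,△')`: the types of the edges crossed by a
shortest edge-connected chain from `△` to `△'`. -/
def SmType (T T' : Tri) : Set (Fin 3) :=
  {i | ∃ c, TriIsChain T T' (minLen T T') c ∧ i ∈ chainTypes (minLen T T') c}

/-- `q` is the polynomial piece of `f` on the triangle `T`. -/
def IsPiece (f : Pt → ℝ) (T : Tri) (q : BPoly) : Prop := EqOn f (evalP q) T.toSet

/-- The strongly regular spline space `Ŝ^d(M,V)`: piecewise polynomials such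
that for any two triangles of `M` with intersecting closures, the derivatives
`D_s`, `s ∈ ⋂_{i ∈ SmType(△,△')} Iᵢ^d`, of the two polynomial pieces agree on the
intersection of the closures (i.e. `D_s f` is continuous there). -/
def StrongSpline (M : Finset Tri) (V : Set BPoly) (d : Fin 3 → ℕ) : Set (Pt → ℝ) :=
  {f | f ∈ PP M V ∧
    ∀ T ∈ M, ∀ T' ∈ M, (T.cl ∩ T'.cl).Nonempty →
      ∀ s : Fin 3 → ℕ, (∀ i ∈ SmType T T', s ∈ Iset d i) →
        ∀ q q' : BPoly, IsPiece f T q → IsPiece f T' q' →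
          ∀ x ∈ T.cl ∩ T'.cl, evalP (Dmix s q) x = evalP (Dmix s q') x}

/-- Kissing triangles: the closures intersect in exactly one point. -/
def Kissing (T T' : Tri) : Prop := ∃ p : Pt, T.cl ∩ T'.cl = {p}

/-- An over-concave vertex of `M`: exactly one triangle of `star(ν)` is
missing from `M`. -/
def OverConcave (M : Finset Tri) (ν : ℤ × ℤ) : Prop :=
  ∃! T : Tri, ν ∈ T.vertices ∧ T ∉ M

/- ## Type-I box splines -/

/-- The Courant hat function `B_{(1,1,1)}`: the piecewise linear function on
`G` supported on `star((1,1))` with value `1` at `(1,1)` and `0` at all other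
lattice points. -/
def hat (p : Pt) : ℝ :=
  max 0 (min (min (min p.1 p.2) (min (2 - p.1) (2 - p.2)))
             (min (1 - (p.1 - p.2)) (1 + (p.1 - p.2))))

/-- The type-I box spline `B_{(n₁,n₂,n₃)}`, defined by repeated directional
convolution starting from the Courant hat function (the result is independent
of the order of the convolutions); junk value `0` if some `nᵢ = 0`. -/
noncomputable def boxN : ℕ → ℕ → ℕ → Pt → ℝ
  | 0, _, _, _ => 0
  | _ + 1, 0, _, _ => 0
  | _ + 1, _ + 1, 0, _ => 0
  | 1, 1, 1, p => hat p
  | a + 2, b + 1, c + 1, p =>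
      ∫ t in (0:ℝ)..1, boxN (a + 1) (b + 1) (c + 1) (p.1 - t, p.2)
  | 1, b + 2, c + 1, p =>
      ∫ t in (0:ℝ)..1, boxN 1 (b + 1) (c + 1) (p.1, p.2 - t)
  | 1, 1, c + 2, p =>
      ∫ t in (0:ℝ)..1, boxN 1 1 (c + 1) (p.1 - t, p.2 - t)
  termination_by a b c _ => a + b + c
  decreasing_by all_goals omega

/-- The translate `B_n(· - w)` of the box spline. -/
def trBox (n₁ n₂ n₃ : ℕ) (w : ℤ × ℤ) (p : Pt) : ℝ :=
  boxN n₁ n₂ n₃ (p.1 - (w.1 : ℝ), p.2 - (w.2 : ℝ))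

/-- `Supp_n(△̂)`: lattice translates of `B_n` that do not vanish identically
on the triangle `T`. -/
def activeSet (n₁ n₂ n₃ : ℕ) (T : Tri) : Set (ℤ × ℤ) :=
  {w | ¬ ∀ p ∈ T.toSet, trBox n₁ n₂ n₃ w p = 0}

/-- `c` is the coefficient vector of the polynomial `q` with respect to the
active box-spline translates on `T`:  `q|_T = Σ_β λ_T^β(q)·β|_T`. -/
def Represents (n₁ n₂ n₃ : ℕ) (T : Tri) (q : BPoly) (c : (ℤ × ℤ) →₀ ℝ) : Prop :=
  ↑c.support ⊆ activeSet n₁ n₂ n₃ T ∧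
    ∀ p ∈ T.toSet, evalP q p = c.sum fun w a => a * trBox n₁ n₂ n₃ w p

/-- `V_n` (relative to the triangle `T`): polynomials whose restriction to `T`
is a linear combination of the active box-spline translates on `T`. -/
def VSpace (n₁ n₂ n₃ : ℕ) (T : Tri) : Set BPoly :=
  {q | ∃ c, Represents n₁ n₂ n₃ T q c}


/-- The polynomial `f = 4(x-y)y + 4(1-x)(x-y) + (x-y)²`. -/
def fEx : BPoly :=
  4 * (X 0 - X 1) * X 1 + 4 * (1 - X 0) * (X 0 - X 1) + (X 0 - X 1) ^ 2

/-- The upper triangle `△` with vertices `(0,0), (0,1), (1,1)`. -/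
def upT : Tri := ⟨(0, 0), true⟩

/-- The lower triangle `△'` with vertices `(0,0), (1,0), (1,1)`. -/
def loT : Tri := ⟨(0, 0), false⟩

/-- The piecewise function `g` with `g|_△ = 0` and `g|_△' = f`. -/
def gEx : Pt → ℝ := fun p => if p.1 ≤ p.2 then 0 else evalP fEx p

/-!
On the unit square `g = max(0, x - y) · (4 - 3x + 3y)`, so along the horizontal line through
`(1/2, 1/2)` it has a kink (slope `0` on the left, `4` on the right) and is not differentiable
there; hence it is not `C¹` on the diamond of the diagonal edge. Every combination
`∑ c_w B_{211}(· - w)`, on the other hand, is differentiable in `x`, since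
`B_{211}(x, y) = ∫_{x-1}^{x} B_{111}(s, y) ds` has a continuous integrand; so `g` is not such a
combination either. Finally `f = 2 (B_{211} - B_{211}(· + e₁) + B_{211}(· + e₃) - B_{211}(· + 2e₁ + e₂))`
on `△'`, by computing these four translates there.
-/

open Filter Topology

lemma integral_eq_of_eqOn_affine {f : ℝ → ℝ} {a b : ℝ} (u v : ℝ) (hab : a ≤ b)
    (h : ∀ t, a ≤ t → t ≤ b → f t = u + v * t) :
    ∫ t in a..b, f t = u * (b - a) + v * (b ^ 2 - a ^ 2) / 2 := by
  rw [intervalIntegral.integral_congr (g := fun t => u + v * t)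
    (by rw [uIcc_of_le hab]; exact fun t ht => h t ht.1 ht.2),
    intervalIntegral.integral_add intervalIntegrable_const
      ((by fun_prop : Continuous fun t : ℝ => v * t).intervalIntegrable _ _),
    intervalIntegral.integral_const_mul, integral_id, intervalIntegral.integral_const,
    smul_eq_mul]
  ring

lemma integral_split_of_continuous {f : ℝ → ℝ} (hf : Continuous f) (a b c : ℝ) :
    ∫ t in a..c, f t = (∫ t in a..b, f t) + ∫ t in b..c, f t :=
  (intervalIntegral.integral_add_adjacent_intervals (hf.intervalIntegrable a b)
    (hf.intervalIntegrable b c)).symm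

lemma differentiable_integral_sub {f : ℝ → ℝ} (hf : Continuous f) (a b : ℝ) :
    Differentiable ℝ fun x => ∫ t in a..b, f (x - t) := by
  have hF : Differentiable ℝ fun u => ∫ s in (0 : ℝ)..u, f s :=
    fun u => (hf.integral_hasStrictDerivAt 0 u).hasDerivAt.differentiableAt
  have key : (fun x => ∫ t in a..b, f (x - t)) =
      fun x => (∫ s in (0 : ℝ)..x - a, f s) - ∫ s in (0 : ℝ)..x - b, f s := by
    ext x
    rw [intervalIntegral.integral_comp_sub_left,
      intervalIntegral.integral_interval_sub_left (hf.intervalIntegrable _ _)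
        (hf.intervalIntegrable _ _)]
  rw [key]
  exact (hF.comp (differentiable_id.sub_const a)).sub (hF.comp (differentiable_id.sub_const b))

lemma not_differentiableAt_max_zero_mul {h : ℝ → ℝ} (hh : DifferentiableAt ℝ h 0)
    (h0 : h 0 ≠ 0) : ¬ DifferentiableAt ℝ (fun t => max 0 t * h t) 0 := by
  intro hd
  have hL := hd.hasDerivAt
  have hL0 : deriv (fun t => max 0 t * h t) 0 = 0 :=
    (uniqueDiffOn_Iic (0 : ℝ) 0 self_mem_Iic).eq_deriv _ hL.hasDerivWithinAt
      ((hasDerivWithinAt_const 0 _ 0).congr (fun t ht => by simp [max_eq_left (mem_Iic.mp ht)])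
        (by simp))
  have hLh : deriv (fun t => max 0 t * h t) 0 = h 0 := by
    refine (uniqueDiffOn_Ici (0 : ℝ) 0 self_mem_Ici).eq_deriv _ hL.hasDerivWithinAt ?_
    have := ((hasDerivAt_id (0 : ℝ)).mul hh.hasDerivAt).hasDerivWithinAt (s := Ici 0)
    simp only [id, one_mul, zero_mul, add_zero] at this
    exact this.congr (fun t ht => by simp [max_eq_right (mem_Ici.mp ht)]) (by simp)
  exact h0 (hLh ▸ hL0)

@[fun_prop]
lemma continuous_hat : Continuous hat := by
  unfold hat; fun_prop

lemma hat_eq_fst {s c : ℝ} (h0 : 0 ≤ s) (h1 : s ≤ c) (h2 : c ≤ 1) : hat (s, c) = s := by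
  simp only [hat, min_def, max_def]; split_ifs <;> linarith

lemma hat_eq_snd {s c : ℝ} (h0 : c ≤ s) (h1 : s ≤ 1) (h2 : 0 ≤ c) : hat (s, c) = c := by
  simp only [hat, min_def, max_def]; split_ifs <;> linarith

lemma hat_eq_one_add_snd_sub_fst {s c : ℝ} (h0 : 1 ≤ s) (h1 : s ≤ 1 + c) (h2 : c ≤ 1) :
    hat (s, c) = 1 + c - s := by
  simp only [hat, min_def, max_def]; split_ifs <;> linarith

lemma hat_eq_one_add_fst_sub_snd {s c : ℝ} (h0 : c - 1 ≤ s) (h1 : s ≤ 1) (h2 : 1 ≤ c) :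
    hat (s, c) = 1 + s - c := by
  simp only [hat, min_def, max_def]; split_ifs <;> linarith

lemma hat_eq_two_sub_snd {s c : ℝ} (h0 : 1 ≤ s) (h1 : s ≤ c) (h2 : c ≤ 2) :
    hat (s, c) = 2 - c := by
  simp only [hat, min_def, max_def]; split_ifs <;> linarith

lemma hat_eq_two_sub_fst {s c : ℝ} (h0 : c ≤ s) (h1 : s ≤ 2) (h2 : 1 ≤ c) :
    hat (s, c) = 2 - s := by
  simp only [hat, min_def, max_def]; split_ifs <;> linarith

lemma hat_eq_zero_of_fst_nonpos {s c : ℝ} (h : s ≤ 0) : hat (s, c) = 0 := by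
  simp only [hat, min_def, max_def]; split_ifs <;> linarith

lemma hat_eq_zero_of_two_le_fst {s c : ℝ} (h : 2 ≤ s) : hat (s, c) = 0 := by
  simp only [hat, min_def, max_def]; split_ifs <;> linarith

lemma hat_eq_zero_of_snd_add_one_le_fst {s c : ℝ} (h : c + 1 ≤ s) : hat (s, c) = 0 := by
  simp only [hat, min_def, max_def]; split_ifs <;> linarith

lemma boxN_two_one_one (p : Pt) : boxN 2 1 1 p = ∫ t in (0 : ℝ)..1, hat (p.1 - t, p.2) := by
  rw [show (2 : ℕ) = 0 + 2 from rfl, boxN]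
  norm_num [boxN]

lemma trBox_two_one_one (w : ℤ × ℤ) (x y : ℝ) :
    trBox 2 1 1 w (x, y) = ∫ t in (0 : ℝ)..1, hat (x - w.1 - t, y - w.2) :=
  boxN_two_one_one _

lemma differentiable_trBox_two_one_one (w : ℤ × ℤ) (y : ℝ) :
    Differentiable ℝ fun x => trBox 2 1 1 w (x, y) := by
  simp only [trBox_two_one_one]
  exact (differentiable_integral_sub (f := fun s => hat (s, y - w.2))
    (by fun_prop) 0 1).comp (differentiable_id.sub_const _)

lemma differentiable_sum_trBox_two_one_one (c : (ℤ × ℤ) →₀ ℝ) (y : ℝ) :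
    Differentiable ℝ fun x => c.sum fun w a => a * trBox 2 1 1 w (x, y) := by
  simp only [Finsupp.sum]
  exact Differentiable.fun_sum fun w _ =>
    (differentiable_trBox_two_one_one w y).const_mul (c w)

/-- Inactive translates vanish on `T`, so they can be dropped from `c`. -/
lemma mem_VSpace_of_eqOn_sum {n₁ n₂ n₃ : ℕ} {T : Tri} {q : BPoly} (c : (ℤ × ℤ) →₀ ℝ)
    (h : ∀ p ∈ T.toSet, evalP q p = c.sum fun w a => a * trBox n₁ n₂ n₃ w p) :
    q ∈ VSpace n₁ n₂ n₃ T := by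
  classical
  refine ⟨c.filter (fun w => w ∈ activeSet n₁ n₂ n₃ T), fun w hw => ?_, fun p hp => ?_⟩
  · rw [Finset.mem_coe, Finsupp.support_filter, Finset.mem_filter] at hw
    exact hw.2
  · have hinactive : (c.filter (fun w => w ∉ activeSet n₁ n₂ n₃ T)).sum
        (fun w a => a * trBox n₁ n₂ n₃ w p) = 0 := by
      rw [Finsupp.sum_filter_index]
      refine Finset.sum_eq_zero fun w hw => ?_
      rw [Finsupp.support_filter, Finset.mem_filter, activeSet, mem_ofPred_eq, not_not] at hw
      rw [hw.2 p hp, mul_zero]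
    rw [h p hp, ← Finsupp.sum_filter_add_sum_filter_not (p := fun w => w ∈ activeSet n₁ n₂ n₃ T),
      hinactive, add_zero]

lemma zero_mem_VSpace {n₁ n₂ n₃ : ℕ} {T : Tri} : (0 : BPoly) ∈ VSpace n₁ n₂ n₃ T :=
  mem_VSpace_of_eqOn_sum 0 fun p _ => by simp [evalP]

lemma mem_upT_toSet {p : Pt} : p ∈ upT.toSet ↔ 0 < p.1 ∧ p.1 < p.2 ∧ p.2 < 1 := by
  simp [Tri.toSet, upT]

lemma mem_loT_toSet {p : Pt} : p ∈ loT.toSet ↔ 0 < p.2 ∧ p.2 < p.1 ∧ p.1 < 1 := by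
  simp [Tri.toSet, loT]

lemma trBox_zero_zero_of_mem_loT {x y : ℝ} (h : (x, y) ∈ loT.toSet) :
    trBox 2 1 1 (0, 0) (x, y) = x * y - y ^ 2 / 2 := by
  obtain ⟨hy, hyx, hx⟩ := mem_loT_toSet.mp h
  rw [trBox_two_one_one]
  norm_num
  rw [integral_split_of_continuous (by fun_prop) 0 x,
    integral_split_of_continuous (by fun_prop) 0 (x - y),
    integral_eq_of_eqOn_affine y 0 (by linarith)
      fun t _ _ => by rw [hat_eq_snd (by linarith) (by linarith) (by linarith)]; ring,
    integral_eq_of_eqOn_affine x (-1) (by linarith)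
      fun t _ _ => by rw [hat_eq_fst (by linarith) (by linarith) (by linarith)]; ring,
    integral_eq_of_eqOn_affine 0 0 (by linarith)
      fun t _ _ => by rw [hat_eq_zero_of_fst_nonpos (by linarith)]; ring]
  ring

lemma trBox_negOne_zero_of_mem_loT {x y : ℝ} (h : (x, y) ∈ loT.toSet) :
    trBox 2 1 1 (-1, 0) (x, y) = y - x * y + y ^ 2 / 2 := by
  obtain ⟨hy, hyx, hx⟩ := mem_loT_toSet.mp h
  rw [trBox_two_one_one]
  norm_num
  rw [integral_split_of_continuous (by fun_prop) 0 x,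
    integral_split_of_continuous (by fun_prop) 0 (x - y),
    integral_eq_of_eqOn_affine 0 0 (by linarith)
      fun t _ _ => by rw [hat_eq_zero_of_snd_add_one_le_fst (by linarith)]; ring,
    integral_eq_of_eqOn_affine (y - x) 1 (by linarith)
      fun t _ _ => by rw [hat_eq_one_add_snd_sub_fst (by linarith) (by linarith) (by linarith)]; ring,
    integral_eq_of_eqOn_affine y 0 (by linarith)
      fun t _ _ => by rw [hat_eq_snd (by linarith) (by linarith) (by linarith)]; ring]
  ring

lemma trBox_negOne_negOne_of_mem_loT {x y : ℝ} (h : (x, y) ∈ loT.toSet) :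
    trBox 2 1 1 (-1, -1) (x, y) = 1 / 2 + x - y - x ^ 2 + x * y - y ^ 2 / 2 := by
  obtain ⟨hy, hyx, hx⟩ := mem_loT_toSet.mp h
  rw [trBox_two_one_one]
  norm_num
  rw [integral_split_of_continuous (by fun_prop) 0 x,
    integral_split_of_continuous (by fun_prop) 0 (x - y),
    integral_eq_of_eqOn_affine (1 - x) 1 (by linarith)
      fun t _ _ => by rw [hat_eq_two_sub_fst (by linarith) (by linarith) (by linarith)]; ring,
    integral_eq_of_eqOn_affine (1 - y) 0 (by linarith)
      fun t _ _ => by rw [hat_eq_two_sub_snd (by linarith) (by linarith) (by linarith)]; ring,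
    integral_eq_of_eqOn_affine (x + 1 - y) (-1) (by linarith)
      fun t _ _ => by rw [hat_eq_one_add_fst_sub_snd (by linarith) (by linarith) (by linarith)]; ring]
  ring

lemma trBox_negTwo_negOne_of_mem_loT {x y : ℝ} (h : (x, y) ∈ loT.toSet) :
    trBox 2 1 1 (-2, -1) (x, y) = (1 - x) ^ 2 / 2 := by
  obtain ⟨hy, hyx, hx⟩ := mem_loT_toSet.mp h
  rw [trBox_two_one_one]
  norm_num
  rw [integral_split_of_continuous (by fun_prop) 0 x,
    integral_eq_of_eqOn_affine 0 0 (by linarith)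
      fun t _ _ => by rw [hat_eq_zero_of_two_le_fst (by linarith)]; ring,
    integral_eq_of_eqOn_affine (-x) 1 (by linarith)
      fun t _ _ => by rw [hat_eq_two_sub_fst (by linarith) (by linarith) (by linarith)]; ring]
  ring

lemma evalP_fEx (p : Pt) : evalP fEx p = (p.1 - p.2) * (4 - 3 * p.1 + 3 * p.2) := by
  simp [fEx, evalP]
  ring

lemma fEx_mem_VSpace : fEx ∈ VSpace 2 1 1 loT := by
  refine mem_VSpace_of_eqOn_sum (Finsupp.single (0, 0) 2 + Finsupp.single (-1, 0) (-2) +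
    Finsupp.single (-1, -1) 2 + Finsupp.single (-2, -1) (-2)) fun ⟨x, y⟩ h => ?_
  simp only [Finsupp.sum_add_index', Finsupp.sum_single_index, zero_mul, add_mul,
    implies_true]
  rw [trBox_zero_zero_of_mem_loT h, trBox_negOne_zero_of_mem_loT h,
    trBox_negOne_negOne_of_mem_loT h, trBox_negTwo_negOne_of_mem_loT h, evalP_fEx]
  ring

lemma gEx_eq_max (p : Pt) : gEx p = max 0 (p.1 - p.2) * (4 - 3 * p.1 + 3 * p.2) := by
  rw [gEx]
  split_ifs with h
  · rw [max_eq_left (by linarith), zero_mul]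
  · rw [evalP_fEx, max_eq_right (by linarith)]

lemma continuous_gEx : Continuous gEx := by
  simp only [funext gEx_eq_max]
  fun_prop

lemma gEx_eqOn_upT : EqOn gEx 0 upT.toSet := fun p hp => by
  simp [gEx, (mem_upT_toSet.mp hp).2.1.le]

lemma gEx_eqOn_loT : EqOn gEx (evalP fEx) loT.toSet := fun p hp => by
  simp [gEx, (mem_loT_toSet.mp hp).2.1]

lemma mem_upT_cl {p : Pt} (h0 : 0 < p.1) (h : p.1 ≤ p.2) (h1 : p.2 < 1) : p ∈ upT.cl := by
  have hlim : Tendsto (fun ε : ℝ => (p.1 - ε, p.2)) (𝓝[>] 0) (𝓝 p) := by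
    refine tendsto_nhdsWithin_of_tendsto_nhds ?_
    simpa using ((by fun_prop : Continuous fun ε : ℝ => (p.1 - ε, p.2)).tendsto 0)
  refine mem_closure_of_tendsto hlim ?_
  filter_upwards [Ioo_mem_nhdsGT h0] with ε hε
  exact mem_upT_toSet.mpr ⟨by linarith [hε.2], by linarith [hε.1], h1⟩

lemma mem_loT_cl {p : Pt} (h0 : 0 < p.2) (h : p.2 ≤ p.1) (h1 : p.1 < 1) : p ∈ loT.cl := by
  have hlim : Tendsto (fun ε : ℝ => (p.1, p.2 - ε)) (𝓝[>] 0) (𝓝 p) := by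
    refine tendsto_nhdsWithin_of_tendsto_nhds ?_
    simpa using ((by fun_prop : Continuous fun ε : ℝ => (p.1, p.2 - ε)).tendsto 0)
  refine mem_closure_of_tendsto hlim ?_
  filter_upwards [Ioo_mem_nhdsGT h0] with ε hε
  exact mem_loT_toSet.mpr ⟨by linarith [hε.2], by linarith [hε.1], h1⟩

lemma Mstar_upT_loT : Mstar {upT, loT} = upT.cl ∪ loT.cl := by
  simp [Mstar]

lemma diamond_upT_loT_diagonal : diamond {upT, loT} ((0, 0), 2) = upT.cl ∪ loT.cl := by
  have hboth :
      ({upT, loT} : Finset Tri).filter (fun T => ((0, 0), 2) ∈ T.edges) = {upT, loT} := by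
    decide
  simp [diamond, hboth]

lemma upT_cl_union_loT_cl_mem_nhds : upT.cl ∪ loT.cl ∈ 𝓝 ((1 / 2, 1 / 2) : Pt) := by
  refine mem_of_superset
    ((isOpen_Ioo.prod isOpen_Ioo : IsOpen (Ioo (0 : ℝ) 1 ×ˢ Ioo (0 : ℝ) 1)).mem_nhds
      (by norm_num))
    fun p ⟨⟨hx0, hx1⟩, ⟨hy0, hy1⟩⟩ => ?_
  rcases le_total p.1 p.2 with h | h
  · exact Or.inl (mem_upT_cl hx0 h hy1)
  · exact Or.inr (mem_loT_cl hy0 h hx1)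

lemma tendsto_horizontal_line :
    Tendsto (fun t : ℝ => ((1 / 2 + t, 1 / 2) : Pt)) (𝓝 0) (𝓝 (1 / 2, 1 / 2)) := by
  simpa using ((by fun_prop : Continuous fun t : ℝ => ((1 / 2 + t, 1 / 2) : Pt)).tendsto 0)

lemma not_differentiableAt_gEx_horizontal :
    ¬ DifferentiableAt ℝ (fun t : ℝ => gEx (1 / 2 + t, 1 / 2)) 0 := by
  have hline : (fun t : ℝ => gEx (1 / 2 + t, 1 / 2)) = fun t => max 0 t * (4 - 3 * t) := by
    ext t
    rw [gEx_eq_max]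
    ring_nf
  rw [hline]
  exact not_differentiableAt_max_zero_mul (by fun_prop) (by norm_num)

lemma gEx_mem_splineSpace_zero :
    gEx ∈ SplineSpace {upT, loT} (VSpace 2 1 1 loT) ![0, 0, 0] := by
  refine ⟨⟨continuous_gEx.continuousOn, ?_⟩, fun ε _ => ?_⟩
  · simp only [Finset.mem_insert, Finset.mem_singleton, forall_eq_or_imp, forall_eq]
    exact ⟨⟨0, zero_mem_VSpace, fun p hp => by simp [gEx_eqOn_upT hp, evalP]⟩,
      ⟨fEx, fEx_mem_VSpace, gEx_eqOn_loT⟩⟩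
  · have hd : (![0, 0, 0] : Fin 3 → ℕ) = 0 := by
      ext i
      fin_cases i <;> rfl
    rw [hd, Pi.zero_apply, Nat.cast_zero, contDiffOn_zero]
    exact continuous_gEx.continuousOn

lemma not_exists_sum_trBox_eq_gEx : ¬ ∃ c : (ℤ × ℤ) →₀ ℝ, ∀ p ∈ Mstar {upT, loT},
    gEx p = c.sum fun w a => a * trBox 2 1 1 w p := by
  rintro ⟨c, hc⟩
  have hnear : ∀ᶠ t in 𝓝 (0 : ℝ), ((1 / 2 + t, 1 / 2) : Pt) ∈ Mstar {upT, loT} :=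
    tendsto_horizontal_line (Mstar_upT_loT ▸ upT_cl_union_loT_cl_mem_nhds)
  refine not_differentiableAt_gEx_horizontal
    (((differentiable_sum_trBox_two_one_one c (1 / 2)).comp
      (differentiable_id.const_add (1 / 2))).differentiableAt.congr_of_eventuallyEq ?_)
  filter_upwards [hnear] with t ht
  exact hc _ ht

lemma gEx_notMem_splineSpace_zero_one_one :
    gEx ∉ SplineSpace {upT, loT} (VSpace 2 1 1 loT) ![0, 1, 1] := by
  intro h
  have hC1 : ContDiffOn ℝ 1 gEx (upT.cl ∪ loT.cl) := by
    simpa [diamond_upT_loT_diagonal] using h.2 ((0, 0), 2) ⟨upT, by simp, by decide⟩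
  have hdiff : DifferentiableAt ℝ gEx ((1 / 2 + 0, 1 / 2) : Pt) := by
    rw [add_zero]
    exact (hC1.differentiableOn one_ne_zero).differentiableAt upT_cl_union_loT_cl_mem_nhds
  exact not_differentiableAt_gEx_horizontal
    (hdiff.comp (f := fun t : ℝ => ((1 / 2 + t, 1 / 2) : Pt)) 0 (by fun_prop))

/-- For `n = (2,1,1)` and `M = △̂ ∪ △̂'` (two triangles
sharing the type-3 edge from `(0,0)` to `(1,1)`), `f ∈ V_{(2,1,1)}`; the
piecewise function `g` (`0` on `△`, `f` on `△'`) is continuous on `M*`, so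
`g ∈ S^{(0,0,0)}(M, V_n)`; yet `g` is not a linear combination of the active
box spline translates, and `g ∉ S^{(0,1,1)}(M, V_n)`. -/
theorem statement16 :
    fEx ∈ VSpace 2 1 1 loT ∧
    EqOn gEx 0 upT.toSet ∧
    EqOn gEx (evalP fEx) loT.toSet ∧
    gEx ∈ SplineSpace {upT, loT} (VSpace 2 1 1 loT) ![0, 0, 0] ∧
    ¬ (∃ c : (ℤ × ℤ) →₀ ℝ, ∀ p ∈ Mstar {upT, loT},
        gEx p = c.sum fun w a => a * trBox 2 1 1 w p) ∧
    gEx ∉ SplineSpace {upT, loT} (VSpace 2 1 1 loT) ![0, 1, 1] :=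
  ⟨fEx_mem_VSpace, gEx_eqOn_upT, gEx_eqOn_loT, gEx_mem_splineSpace_zero,
    not_exists_sum_trBox_eq_gEx, gEx_notMem_splineSpace_zero_one_one⟩

end
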